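/- (Green's theorem for a variable-length domain) Let s_p : [t0,tf] → R be C^1 with s_p(t) ≤ L, and let r, δr : {(s̄,t) : t ∈ [t0,tf], s̄ ∈ [s_p(t), L]} → R^3 be C^2 with δr(·, t0) = δr(·, tf) = 0. Then ∫_{t0}^{tf} ∫_{s_p(t)}^{L} ṙ(s̄,t) · δṙ(s̄,t) ds̄ dt = ∫_{t0}^{tf} [ ∫_{s_p(t)}^{L} -r̈(s̄,t) · δr(s̄,t) ds̄ + ṙ(s_p(t),t) · δr(s_p(t),t) ṡ_p(t) ] dt. -/

import Mathlib

/-!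
Let `g t = ∫ s in sp t..L, ⟪ṙ s t, δr s t⟫`, which vanishes at `t0` and `tf`. Differentiating
under the integral sign, with the Leibniz term of the moving lower limit,
`g' t = ∫ s in sp t..L, (⟪ṙ, δṙ⟫ + ⟪r̈, δr⟫) - ṡp t * ⟪ṙ, δr⟫ (sp t) t`, and `∫ g' = 0` is the
identity. The moving-limit rule is the chain rule for `(u, t) ↦ ∫ s in u..L, f s t`, which is
differentiable because both of its partial derivatives are continuous.
-/

open MeasureTheory intervalIntegral Set Metric
open scoped RealInnerProductSpace

section Calculus

variable {E : Type*} [NormedAddCommGroup E] [NormedSpace ℝ E]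

theorem hasDerivAt_comp_of_continuous_partials {f f₁ f₂ : ℝ → ℝ → E}
    (h₁ : ∀ u v, HasDerivAt (f · v) (f₁ u v) u) (h₂ : ∀ u v, HasDerivAt (f u) (f₂ u v) v)
    (c₁ : Continuous ↿f₁) (c₂ : Continuous ↿f₂) {a b : ℝ → ℝ} {a' b' t : ℝ}
    (ha : HasDerivAt a a' t) (hb : HasDerivAt b b' t) :
    HasDerivAt (fun t => f (a t) (b t)) (a' • f₁ (a t) (b t) + b' • f₂ (a t) (b t)) t := by
  have hf := hasStrictFDerivAt_uncurry_coprod (u := (a t, b t))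
    (f₁ := fun u v => (1 : ℝ →L[ℝ] ℝ).smulRight (f₁ u v))
    (f₂ := fun u v => (1 : ℝ →L[ℝ] ℝ).smulRight (f₂ u v))
    (.of_forall fun v => (h₁ v.1 v.2).hasFDerivAt) (.of_forall fun v => (h₂ v.1 v.2).hasFDerivAt)
    ((ContinuousLinearMap.smulRightL ℝ ℝ E 1).continuous.comp c₁).continuousAt
    ((ContinuousLinearMap.smulRightL ℝ ℝ E 1).continuous.comp c₂).continuousAt
  refine (hf.hasFDerivAt.comp_hasDerivAt t (ha.prodMk hb)).congr_deriv ?_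
  simp [Function.HasUncurry.uncurry]

theorem ContDiff.uncurry_deriv_right {f : ℝ → ℝ → E} {m n : WithTop ℕ∞}
    (hf : ContDiff ℝ m ↿f) (hnm : n + 1 ≤ m) : ContDiff ℝ n ↿fun s t => deriv (f s) t :=
  ContDiff.fderiv_apply (f := fun p : ℝ × ℝ => f p.1)
    (hf.comp (contDiff_fst.comp contDiff_fst |>.prodMk contDiff_snd)) contDiff_snd
    contDiff_const hnm

theorem ContDiff.hasDerivAt_deriv_right {f : ℝ → ℝ → E} {n : WithTop ℕ∞} (hf : ContDiff ℝ n ↿f)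
    (hn : n ≠ 0) (s t : ℝ) : HasDerivAt (f s) (deriv (f s) t) t :=
  ((hf.comp (contDiff_const.prodMk contDiff_id)).differentiable hn t).hasDerivAt

theorem hasDerivAt_intervalIntegral_of_continuous_deriv {f f' : ℝ → ℝ → E}
    (hf : ∀ t, Continuous (f · t)) (hf' : Continuous ↿f')
    (hd : ∀ s t, HasDerivAt (f s) (f' s t) t) (a b t : ℝ) :
    HasDerivAt (fun t => ∫ s in a..b, f s t) (∫ s in a..b, f' s t) t := by
  obtain ⟨M, hM⟩ := (isCompact_uIcc.prod (isCompact_closedBall t 1)).exists_bound_of_continuousOn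
    hf'.continuousOn
  refine (hasDerivAt_integral_of_dominated_loc_of_deriv_le (bound := fun _ => M)
    (closedBall_mem_nhds t one_pos) (.of_forall fun τ => (hf τ).aestronglyMeasurable)
    ((hf t).intervalIntegrable a b)
    (hf'.comp (continuous_id.prodMk continuous_const)).aestronglyMeasurable ?_
    intervalIntegrable_const (.of_forall fun s _ τ _ => hd s τ)).2
  exact .of_forall fun s hs τ hτ => hM (s, τ) ⟨uIoc_subset_uIcc hs, hτ⟩

theorem continuous_uncurry_intervalIntegral_lower {f : ℝ → ℝ → E} (hf : Continuous ↿f) (b : ℝ) :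
    Continuous ↿fun u t => ∫ s in u..b, f s t := by
  have h : Continuous fun p : ℝ × ℝ => ∫ s in b..p.1, f s p.2 :=
    continuous_parametric_intervalIntegral_of_continuous (f := fun (p : ℝ × ℝ) s => f s p.2)
      (hf.comp (continuous_snd.prodMk (continuous_snd.comp continuous_fst))) continuous_fst
  convert h.neg using 1
  exact funext fun p => integral_symm _ _

theorem Continuous.intervalIntegral_lower {f : ℝ → ℝ → E} (hf : Continuous ↿f) {a : ℝ → ℝ}
    (ha : Continuous a) (b : ℝ) : Continuous fun t => ∫ s in a t..b, f s t :=
  (continuous_uncurry_intervalIntegral_lower hf b).comp (ha.prodMk continuous_id)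

variable [CompleteSpace E]

theorem hasDerivAt_intervalIntegral_moving_lower {f f' : ℝ → ℝ → E} (hf : Continuous ↿f)
    (hf' : Continuous ↿f') (hd : ∀ s t, HasDerivAt (f s) (f' s t) t) {a : ℝ → ℝ} {a' t : ℝ}
    (ha : HasDerivAt a a' t) (b : ℝ) :
    HasDerivAt (fun t => ∫ s in a t..b, f s t) ((∫ s in a t..b, f' s t) - a' • f (a t) t) t := by
  have hsec : ∀ t, Continuous (f · t) := fun t => hf.comp (continuous_id.prodMk continuous_const)
  have h := hasDerivAt_comp_of_continuous_partials (f := fun u t => ∫ s in u..b, f s t)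
    (fun u v => integral_hasDerivAt_left ((hsec v).intervalIntegrable u b)
      ((hsec v).stronglyMeasurableAtFilter _ _) (hsec v).continuousAt)
    (fun u v => hasDerivAt_intervalIntegral_of_continuous_deriv hsec hf' hd u b v)
    hf.neg (continuous_uncurry_intervalIntegral_lower hf' b) ha (hasDerivAt_id' t)
  convert h using 1
  simp [sub_eq_add_neg, add_comm]

theorem integral_integral_deriv_eq_integral_boundary {f f' : ℝ → ℝ → E} (hf : Continuous ↿f)
    (hf' : Continuous ↿f') (hd : ∀ s t, HasDerivAt (f s) (f' s t) t) {a : ℝ → ℝ}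
    (ha : ContDiff ℝ 1 a) (b : ℝ) {t₀ t₁ : ℝ} (h₀ : ∀ s, f s t₀ = 0) (h₁ : ∀ s, f s t₁ = 0) :
    ∫ t in t₀..t₁, ∫ s in a t..b, f' s t = ∫ t in t₀..t₁, deriv a t • f (a t) t := by
  have hbulk : Continuous fun t => ∫ s in a t..b, f' s t :=
    hf'.intervalIntegral_lower ha.continuous b
  have hflux : Continuous fun t => deriv a t • f (a t) t :=
    ha.continuous_deriv_one.smul (hf.comp (ha.continuous.prodMk continuous_id))
  have hftc := integral_eq_sub_of_hasDerivAt
    (fun t _ => hasDerivAt_intervalIntegral_moving_lower hf hf' hd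
      ((ha.differentiable one_ne_zero t).hasDerivAt) b)
    ((hbulk.sub hflux).intervalIntegrable t₀ t₁)
  simp only [h₀, h₁, intervalIntegral.integral_zero, sub_self] at hftc
  rwa [integral_sub (hbulk.intervalIntegrable _ _) (hflux.intervalIntegrable _ _), sub_eq_zero]
    at hftc

end Calculus

section InnerProduct

variable {F : Type*} [NormedAddCommGroup F] [InnerProductSpace ℝ F]

theorem integral_integral_inner_deriv_eq_by_parts {x x' y y' : ℝ → ℝ → F} (hx : Continuous ↿x)
    (hx' : Continuous ↿x') (hy : Continuous ↿y) (hy' : Continuous ↿y')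
    (hxd : ∀ s t, HasDerivAt (x s) (x' s t) t) (hyd : ∀ s t, HasDerivAt (y s) (y' s t) t)
    {a : ℝ → ℝ} (ha : ContDiff ℝ 1 a) (b : ℝ) {t₀ t₁ : ℝ} (h₀ : ∀ s, y s t₀ = 0)
    (h₁ : ∀ s, y s t₁ = 0) :
    ∫ t in t₀..t₁, ∫ s in a t..b, ⟪x s t, y' s t⟫
      = ∫ t in t₀..t₁, ((∫ s in a t..b, -⟪x' s t, y s t⟫)
          + ⟪x (a t) t, y (a t) t⟫ * deriv a t) := by
  have hP : Continuous ↿fun s t => ⟪x' s t, y s t⟫ := hx'.inner hy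
  have hQ : Continuous ↿fun s t => ⟪x s t, y' s t⟫ := hx.inner hy'
  have hflux : Continuous fun t => ⟪x (a t) t, y (a t) t⟫ * deriv a t :=
    ((hx.inner hy).comp (ha.continuous.prodMk continuous_id)).mul ha.continuous_deriv_one
  have transport := integral_integral_deriv_eq_integral_boundary
    (f := fun s t => ⟪x s t, y s t⟫) (hx.inner hy) (hQ.add hP)
    (fun s t => (hxd s t).inner ℝ (hyd s t)) ha b (t₀ := t₀) (t₁ := t₁)
    (by simp [h₀]) (by simp [h₁])
  have hsplit : ∀ t, ∫ s in a t..b, (⟪x s t, y' s t⟫ + ⟪x' s t, y s t⟫)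
      = (∫ s in a t..b, ⟪x s t, y' s t⟫) + ∫ s in a t..b, ⟪x' s t, y s t⟫ := fun t =>
    integral_add ((hQ.comp (continuous_id.prodMk continuous_const)).intervalIntegrable _ _)
      ((hP.comp (continuous_id.prodMk continuous_const)).intervalIntegrable _ _)
  have hPi := (hP.intervalIntegral_lower ha.continuous b).intervalIntegrable (μ := volume) t₀ t₁
  have hQi := (hQ.intervalIntegral_lower ha.continuous b).intervalIntegrable (μ := volume) t₀ t₁
  simp only [hsplit, integral_add hQi hPi, smul_eq_mul, mul_comm (deriv a _)] at transport
  have hPni : IntervalIntegrable (fun t => -∫ s in a t..b, ⟪x' s t, y s t⟫) volume t₀ t₁ :=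
    hPi.neg
  simp only [intervalIntegral.integral_neg]
  rw [integral_add hPni (hflux.intervalIntegrable _ _), intervalIntegral.integral_neg]
  linarith

end InnerProduct

theorem greens_theorem_variable_domain_general
    (t0 tf L : ℝ) (sp : ℝ → ℝ) (r dr : ℝ → ℝ → EuclideanSpace ℝ (Fin 3))
    (hsp : ContDiff ℝ 1 sp)
    (hr : ContDiff ℝ 2 (fun p : ℝ × ℝ => r p.1 p.2))
    (hdr : ContDiff ℝ 2 (fun p : ℝ × ℝ => dr p.1 p.2))
    (h0 : ∀ sb, dr sb t0 = 0) (hf : ∀ sb, dr sb tf = 0) :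
    (∫ t in t0..tf, ∫ sb in sp t..L,
        (inner ℝ (deriv (fun τ => r sb τ) t) (deriv (fun τ => dr sb τ) t) : ℝ))
      = ∫ t in t0..tf,
          ((∫ sb in sp t..L,
              -(inner ℝ (deriv (deriv (fun τ => r sb τ)) t) (dr sb t) : ℝ))
            + (inner ℝ (deriv (fun τ => r (sp t) τ) t) (dr (sp t) t) : ℝ) * deriv sp t) := by
  have hr' : ContDiff ℝ 1 ↿fun s t => deriv (r s) t := hr.uncurry_deriv_right le_rfl
  have hr'' : ContDiff ℝ 0 ↿fun s t => deriv (deriv (r s)) t :=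
    hr'.uncurry_deriv_right le_rfl
  have hdr' : ContDiff ℝ 0 ↿fun s t => deriv (dr s) t := hdr.uncurry_deriv_right (by norm_num)
  exact integral_integral_inner_deriv_eq_by_parts hr'.continuous hr''.continuous hdr.continuous
    hdr'.continuous (hr'.hasDerivAt_deriv_right one_ne_zero)
    (hdr.hasDerivAt_deriv_right two_ne_zero) hsp L h0 hf

theorem greens_theorem_variable_domain
    (t0 tf L : ℝ) (sp : ℝ → ℝ) (r dr : ℝ → ℝ → EuclideanSpace ℝ (Fin 3))
    (hsp : ContDiff ℝ 1 sp) (hspL : ∀ t, sp t ≤ L)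
    (hr : ContDiff ℝ 2 (fun p : ℝ × ℝ => r p.1 p.2))
    (hdr : ContDiff ℝ 2 (fun p : ℝ × ℝ => dr p.1 p.2))
    (h0 : ∀ sb, dr sb t0 = 0) (hf : ∀ sb, dr sb tf = 0) :
    (∫ t in t0..tf, ∫ sb in sp t..L,
        (inner ℝ (deriv (fun τ => r sb τ) t) (deriv (fun τ => dr sb τ) t) : ℝ))
      = ∫ t in t0..tf,
          ((∫ sb in sp t..L,
              -(inner ℝ (deriv (deriv (fun τ => r sb τ)) t) (dr sb t) : ℝ))
            + (inner ℝ (deriv (fun τ => r (sp t) τ) t) (dr (sp t) t) : ℝ) * deriv sp t) :=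
  greens_theorem_variable_domain_general t0 tf L sp r dr hsp hr hdr h0 hf
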